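/- arXiv:1011.5440 — 3 statements merged into one kernel-verified Lean document; each statement's English description precedes it below -/
import Mathlib

section
/- Fix n ≥ 2. There exists α₀ ∈ (0, 1/4] such that for all 0 < α ≤ α₀ the following holds. Suppose u ∈ W^{1,2}(D₁, S²) has the form u(r,θ) = Π⁻¹(f(r)(cos nθ, sin nθ)) with f(1) = α, lim_{r→0} f(r) = +∞, min_{0≤r≤1} f(r) = a > 0, and s := inf{r ∈ (0,1] : f(r) = 1/2} ≤ C₀ a for a fixed constant C₀. Then (1/2)∫_{D₁} |∇u|² dx dy > 4πn + 4πn α²/(1+α²). -/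
/-!
Completing the square in the energy density `E = (f'² + N² f² / r²) r / (1 + f²)²` gives, for
every `c ≥ 0` with `c (1 + f²)² ≤ N² f²` and every `|σ| ≤ 1`, the pointwise bound
`E ≥ c / r + σ G_c(f) f'` (`G_c = calibrationDensity N c`), whose right-hand side is the derivative
of `c log r + σ A(f)` for any primitive `A` of `G_c`. With `c = 0` the energy on `[p, q]` is at
least the change of `N / (1 + f²)`; on `(0, s]`, where `f` comes down from `∞` to `1/2`, this is
`4N/5`. On `[s, 1]`, either `f` climbs back to `2`, which costs another `3N/5`, or `f` stays in
`[a, 2]`, where `c = (N a / (1 + a²))²` is admissible. Going down from `1/2` to the minimum `a`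
and up again to `α` then also collects `c log (1 / s)`, and the scale condition `s ≤ C₀ a`
together with `α ≤ e⁻⁴ / C₀²` makes this term beat both the deficit `2N a² / (1 + a²)` of the
degree term and the error of expanding the square root in `G_c`.
-/

open MeasureTheory Real Set intervalIntegral Filter Topology

noncomputable section

def energyDensity (N : ℝ) (f f' : ℝ → ℝ) (r : ℝ) : ℝ :=
  ((f' r) ^ 2 + N ^ 2 * (f r) ^ 2 / r ^ 2) / (1 + (f r) ^ 2) ^ 2 * r

def calibrationDensity (N c x : ℝ) : ℝ :=
  2 * √(N ^ 2 * x ^ 2 - c * (1 + x ^ 2) ^ 2) / (1 + x ^ 2) ^ 2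

theorem continuous_calibrationDensity (N c : ℝ) : Continuous (calibrationDensity N c) :=
  Continuous.div (by fun_prop) (by fun_prop) fun x ↦ by positivity

theorem calibrationDensity_zero {N x : ℝ} (hN : 0 ≤ N) (hx : 0 ≤ x) :
    calibrationDensity N 0 x = 2 * N * x / (1 + x ^ 2) ^ 2 := by
  rw [calibrationDensity, zero_mul, sub_zero, ← mul_pow, sqrt_sq (by positivity), mul_assoc]

theorem hasDerivAt_neg_div_one_add_sq {N x : ℝ} (hN : 0 ≤ N) (hx : 0 ≤ x) :
    HasDerivAt (fun y ↦ -N / (1 + y ^ 2)) (calibrationDensity N 0 x) x := by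
  refine ((hasDerivAt_const x (-N)).div ((hasDerivAt_pow 2 x).const_add 1)
    (by positivity)).congr_deriv ?_
  rw [calibrationDensity_zero hN hx]; ring

theorem energyDensity_nonneg (N : ℝ) (f f' : ℝ → ℝ) {r : ℝ} (hr : 0 ≤ r) :
    0 ≤ energyDensity N f f' r := by
  unfold energyDensity; positivity

/-- Completing the square `(r F' - σ d)² ≥ 0`, where `d² = N²F² - c(1+F²)²`. -/
theorem div_add_mul_calibrationDensity_le_energyDensity {N c σ r : ℝ} {f f' : ℝ → ℝ}
    (hr : 0 < r) (hσ : |σ| ≤ 1) (hc : c * (1 + f r ^ 2) ^ 2 ≤ N ^ 2 * f r ^ 2) :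
    c / r + σ * (calibrationDensity N c (f r) * f' r) ≤ energyDensity N f f' r := by
  set d := √(N ^ 2 * f r ^ 2 - c * (1 + f r ^ 2) ^ 2)
  have hd : d ^ 2 = N ^ 2 * f r ^ 2 - c * (1 + f r ^ 2) ^ 2 := sq_sqrt (by linarith)
  have hG : calibrationDensity N c (f r) = 2 * d / (1 + f r ^ 2) ^ 2 := rfl
  have hσ2 : σ ^ 2 ≤ 1 := by rw [← sq_abs]; nlinarith [abs_nonneg σ]
  rw [← mul_le_mul_iff_of_pos_right (by positivity : 0 < r * (1 + f r ^ 2) ^ 2)]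
  calc (c / r + σ * (calibrationDensity N c (f r) * f' r)) * (r * (1 + f r ^ 2) ^ 2)
      = c * (1 + f r ^ 2) ^ 2 + 2 * σ * d * f' r * r := by
        rw [hG]; field_simp
    _ ≤ f' r ^ 2 * r ^ 2 + N ^ 2 * f r ^ 2 := by
        nlinarith [sq_nonneg (f' r * r - σ * d), mul_le_mul_of_nonneg_right hσ2 (sq_nonneg d)]
    _ = energyDensity N f f' r * (r * (1 + f r ^ 2) ^ 2) := by
        unfold energyDensity; field_simp

theorem le_integral_energyDensity_of_potential {N c σ p q : ℝ} {f f' A : ℝ → ℝ}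
    (hf : ∀ r ∈ Icc p q, HasDerivAt f (f' r) r)
    (hA : ∀ r ∈ Icc p q, HasDerivAt A (calibrationDensity N c (f r)) (f r))
    (hE : IntegrableOn (energyDensity N f f') (Icc p q))
    (hp : 0 < p) (hpq : p ≤ q) (hσ : |σ| ≤ 1)
    (hc : ∀ r ∈ Icc p q, c * (1 + f r ^ 2) ^ 2 ≤ N ^ 2 * f r ^ 2) :
    c * (log q - log p) + σ * (A (f q) - A (f p)) ≤ ∫ r in p..q, energyDensity N f f' r := by
  have hg : ∀ r ∈ Icc p q, HasDerivAt (fun u ↦ c * log u + σ * A (f u))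
      (c / r + σ * (calibrationDensity N c (f r) * f' r)) r := fun r hr ↦
    (((hasDerivAt_log (hp.trans_le hr.1).ne').const_mul c).add
      (((hA r hr).comp r (hf r hr)).const_mul σ)).congr_deriv (by ring)
  have := sub_le_integral_of_hasDeriv_right_of_le hpq
    (fun r hr ↦ (hg r hr).continuousAt.continuousWithinAt)
    (fun r hr ↦ (hg r (Ioo_subset_Icc_self hr)).hasDerivWithinAt) hE
    (fun r hr ↦ div_add_mul_calibrationDensity_le_energyDensity (hp.trans hr.1) hσ
      (hc r (Ioo_subset_Icc_self hr)))
  linarith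

theorem abs_sub_le_integral_energyDensity {N p q : ℝ} {f f' : ℝ → ℝ}
    (hf : ∀ r ∈ Icc p q, HasDerivAt f (f' r) r)
    (hE : IntegrableOn (energyDensity N f f') (Icc p q))
    (hp : 0 < p) (hpq : p ≤ q) (hN : 0 ≤ N) (hf₀ : ∀ r ∈ Icc p q, 0 ≤ f r) :
    |N / (1 + f p ^ 2) - N / (1 + f q ^ 2)| ≤ ∫ r in p..q, energyDensity N f f' r := by
  have key : ∀ σ : ℝ, |σ| ≤ 1 →
      σ * (N / (1 + f p ^ 2) - N / (1 + f q ^ 2)) ≤ ∫ r in p..q, energyDensity N f f' r :=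
    fun σ hσ ↦ by
      convert le_integral_energyDensity_of_potential hf
        (fun r hr ↦ hasDerivAt_neg_div_one_add_sq hN (hf₀ r hr)) hE hp hpq hσ
        (fun r _ ↦ by nlinarith [sq_nonneg (N * f r)]) using 1
      ring
  exact abs_le'.2 ⟨by simpa using key 1 (by simp), by simpa using key (-1) (by simp)⟩

theorem div_one_add_sq_le_integral_energyDensity {N q : ℝ} {f f' : ℝ → ℝ}
    (hf : ∀ r ∈ Ioc 0 q, HasDerivAt f (f' r) r)
    (hE : IntegrableOn (energyDensity N f f') (Icc 0 q))
    (hq : 0 < q) (hN : 0 ≤ N) (hf₀ : ∀ r ∈ Ioc 0 q, 0 ≤ f r)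
    (hf_tendsto : Tendsto f (𝓝[>] 0) atTop) :
    N / (1 + f q ^ 2) ≤ ∫ r in (0 : ℝ)..q, energyDensity N f f' r := by
  have hlim : Tendsto (fun ε ↦ N / (1 + f q ^ 2) - N / (1 + f ε ^ 2)) (𝓝[>] 0)
      (𝓝 (N / (1 + f q ^ 2))) := by
    have := tendsto_atTop_add_const_left _ 1 ((tendsto_pow_atTop two_ne_zero).comp hf_tendsto)
    simpa using tendsto_const_nhds.sub (tendsto_const_nhds.div_atTop this)
  refine le_of_tendsto hlim ?_
  filter_upwards [Ioo_mem_nhdsGT hq] with ε hε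
  have hsub : Icc ε q ⊆ Ioc 0 q := fun r hr ↦ ⟨hε.1.trans_le hr.1, hr.2⟩
  calc N / (1 + f q ^ 2) - N / (1 + f ε ^ 2)
      ≤ |N / (1 + f ε ^ 2) - N / (1 + f q ^ 2)| := by rw [abs_sub_comm]; exact le_abs_self _
    _ ≤ ∫ r in ε..q, energyDensity N f f' r :=
      abs_sub_le_integral_energyDensity (fun r hr ↦ hf r (hsub hr))
        (hE.mono_set (Icc_subset_Icc hε.1.le le_rfl)) hε.1 hε.2.le hN (fun r hr ↦ hf₀ r (hsub hr))
    _ ≤ ∫ r in (0 : ℝ)..q, energyDensity N f f' r :=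
      integral_mono_interval hε.1.le hε.2.le le_rfl
        ((ae_restrict_iff' measurableSet_Ioc).2 (ae_of_all _ fun r hr ↦
          energyDensity_nonneg N f f' hr.1.le))
        ((intervalIntegrable_iff_integrableOn_Icc_of_le hq.le).2 hE)

theorem le_integral_energyDensity_of_admissible {N c s m b : ℝ} {f f' A : ℝ → ℝ}
    (hf : ∀ r ∈ Icc s b, HasDerivAt f (f' r) r)
    (hA : ∀ x, HasDerivAt A (calibrationDensity N c x) x)
    (hE : IntegrableOn (energyDensity N f f') (Icc s b))
    (hs : 0 < s) (hsm : s ≤ m) (hmb : m ≤ b)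
    (hc : ∀ r ∈ Icc s b, c * (1 + f r ^ 2) ^ 2 ≤ N ^ 2 * f r ^ 2) :
    c * (log b - log s) + (A (f s) - A (f m)) + (A (f b) - A (f m)) ≤
      ∫ r in s..b, energyDensity N f f' r := by
  have hsub₁ : Icc s m ⊆ Icc s b := Icc_subset_Icc le_rfl hmb
  have hsub₂ : Icc m b ⊆ Icc s b := Icc_subset_Icc hsm le_rfl
  have hdown := le_integral_energyDensity_of_potential (σ := -1) (fun r hr ↦ hf r (hsub₁ hr))
    (fun r _ ↦ hA (f r)) (hE.mono_set hsub₁) hs hsm (by simp) (fun r hr ↦ hc r (hsub₁ hr))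
  have hup := le_integral_energyDensity_of_potential (σ := 1) (fun r hr ↦ hf r (hsub₂ hr))
    (fun r _ ↦ hA (f r)) (hE.mono_set hsub₂) (hs.trans_le hsm) hmb (by simp)
    (fun r hr ↦ hc r (hsub₂ hr))
  rw [← integral_add_adjacent_intervals
    ((intervalIntegrable_iff_integrableOn_Icc_of_le hsm).2 (hE.mono_set hsub₁))
    ((intervalIntegrable_iff_integrableOn_Icc_of_le hmb).2 (hE.mono_set hsub₂))]
  linarith

theorem div_one_add_sq_le_div_one_add_sq {a x : ℝ} (ha : 0 < a) (hax : a ≤ x)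
    (hax' : a * x ≤ 1) : a / (1 + a ^ 2) ≤ x / (1 + x ^ 2) := by
  rw [div_le_div_iff₀ (by positivity) (by positivity)]
  nlinarith [mul_nonneg (sub_nonneg.2 hax) (sub_nonneg.2 hax')]

theorem sq_mul_div_one_add_sq_mul_le (N : ℝ) {a x : ℝ} (ha : 0 < a) (hax : a ≤ x)
    (hax' : a * x ≤ 1) : (N * a / (1 + a ^ 2)) ^ 2 * (1 + x ^ 2) ^ 2 ≤ N ^ 2 * x ^ 2 := by
  have h := div_one_add_sq_le_div_one_add_sq ha hax hax'
  calc (N * a / (1 + a ^ 2)) ^ 2 * (1 + x ^ 2) ^ 2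
      = N ^ 2 * (a / (1 + a ^ 2)) ^ 2 * (1 + x ^ 2) ^ 2 := by ring
    _ ≤ N ^ 2 * (x / (1 + x ^ 2)) ^ 2 * (1 + x ^ 2) ^ 2 := by gcongr
    _ = N ^ 2 * x ^ 2 := by field_simp

theorem sub_sub_le_sqrt_sq_sub {A B : ℝ} (hA : 0 < A) (hB : 0 ≤ B) (hBA : B ≤ A ^ 2) :
    A - B / (2 * A) - B ^ 2 / (2 * A ^ 3) ≤ √(A ^ 2 - B) := by
  rcases le_or_gt (A - B / (2 * A) - B ^ 2 / (2 * A ^ 3)) 0 with h | h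
  · exact h.trans (sqrt_nonneg _)
  have hrw : A - B / (2 * A) - B ^ 2 / (2 * A ^ 3) =
      (2 * A ^ 4 - A ^ 2 * B - B ^ 2) / (2 * A ^ 3) := by
    field_simp
  rw [hrw] at h ⊢
  rw [le_sqrt h.le (by linarith), div_pow, div_le_iff₀ (by positivity)]
  nlinarith [mul_nonneg (mul_nonneg (sq_nonneg B) (sub_nonneg.2 hBA))
    (by positivity : (0:ℝ) ≤ 3 * A ^ 2 + B)]

theorem le_calibrationDensity {N c t : ℝ} (hN : 0 < N) (hc : 0 ≤ c) (ht : 0 < t)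
    (ht' : t ≤ 1 / 2) (hct : c * (1 + t ^ 2) ^ 2 ≤ N ^ 2 * t ^ 2) :
    2 * N * t / (1 + t ^ 2) ^ 2 - c / (N * t) - 25 / 16 * c ^ 2 / (N ^ 3 * t ^ 3) ≤
      calibrationDensity N c t := by
  have hsqrt := sub_sub_le_sqrt_sq_sub (A := N * t) (B := c * (1 + t ^ 2) ^ 2) (by positivity)
    (by positivity) (by linarith)
  have h25 : (1 + t ^ 2) ^ 2 ≤ 25 / 16 := by
    have : t ^ 2 ≤ 1 / 4 := by nlinarith
    nlinarith
  have hrem : c ^ 2 * (1 + t ^ 2) ^ 2 / (N ^ 3 * t ^ 3) ≤ 25 / 16 * c ^ 2 / (N ^ 3 * t ^ 3) :=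
    div_le_div_of_nonneg_right (by nlinarith [sq_nonneg c]) (by positivity)
  calc 2 * N * t / (1 + t ^ 2) ^ 2 - c / (N * t) - 25 / 16 * c ^ 2 / (N ^ 3 * t ^ 3)
      ≤ 2 * N * t / (1 + t ^ 2) ^ 2 - c / (N * t) - c ^ 2 * (1 + t ^ 2) ^ 2 / (N ^ 3 * t ^ 3) := by
        linarith
    _ = 2 * (N * t - c * (1 + t ^ 2) ^ 2 / (2 * (N * t))
          - (c * (1 + t ^ 2) ^ 2) ^ 2 / (2 * (N * t) ^ 3)) / (1 + t ^ 2) ^ 2 := by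
        field_simp
    _ ≤ calibrationDensity N c t := by
        rw [calibrationDensity, ← mul_pow]
        gcongr

theorem le_integral_calibrationDensity {N a y : ℝ} (hN : 0 < N) (ha : 0 < a) (hay : a ≤ y)
    (hy : y ≤ 1 / 2) :
    N / (1 + a ^ 2) - N / (1 + y ^ 2) - (N * a / (1 + a ^ 2)) ^ 2 / N * (log y - log a + 25 / 32)
      ≤ ∫ t in a..y, calibrationDensity N ((N * a / (1 + a ^ 2)) ^ 2) t := by
  set c := (N * a / (1 + a ^ 2)) ^ 2
  set Φ : ℝ → ℝ := fun t ↦ -N / (1 + t ^ 2) - c / N * log t + 25 / 32 * (c ^ 2 / N ^ 3) * (t ^ 2)⁻¹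
  have hΦ : ∀ t ∈ Icc a y, HasDerivAt Φ
      (2 * N * t / (1 + t ^ 2) ^ 2 - c / (N * t) - 25 / 16 * c ^ 2 / (N ^ 3 * t ^ 3)) t := by
    intro t ht
    have ht0 : 0 < t := ha.trans_le ht.1
    have h1 := hasDerivAt_neg_div_one_add_sq hN.le ht0.le
    rw [calibrationDensity_zero hN.le ht0.le] at h1
    refine ((h1.sub ((hasDerivAt_log ht0.ne').const_mul (c / N))).add
      (((hasDerivAt_pow 2 t).inv (by positivity)).const_mul _)).congr_deriv ?_
    field_simp
    ring
  have hint := sub_le_integral_of_hasDeriv_right_of_le hay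
    (fun t ht ↦ (hΦ t ht).continuousAt.continuousWithinAt)
    (fun t ht ↦ (hΦ t (Ioo_subset_Icc_self ht)).hasDerivWithinAt)
    (continuous_calibrationDensity N c).integrableOn_Icc
    (fun t ht ↦ le_calibrationDensity hN (by positivity) (ha.trans ht.1) (ht.2.le.trans hy)
      (sq_mul_div_one_add_sq_mul_le N ha ht.1.le (by nlinarith [ht.1, ht.2])))
  have hrem : c ^ 2 / N ^ 3 * (a ^ 2)⁻¹ ≤ c / N := by
    have : c ^ 2 / N ^ 3 * (a ^ 2)⁻¹ = c / N * (1 / (1 + a ^ 2) ^ 2) := by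
      simp only [c]; field_simp
    rw [this]
    exact mul_le_of_le_one_right (by positivity) (by rw [div_le_one (by positivity)]; nlinarith)
  have : 0 ≤ 25 / 32 * (c ^ 2 / N ^ 3) * (y ^ 2)⁻¹ := by positivity
  simp only [Φ, neg_div] at hint
  linarith

theorem sInf_levelSet_spec {f : ℝ → ℝ} {y s : ℝ} (hf : ContinuousOn f (Ioc 0 1))
    (hf_tendsto : Tendsto f (𝓝[>] 0) atTop) (hf1 : f 1 < y)
    (hs : s = sInf {r | r ∈ Ioc (0:ℝ) 1 ∧ f r = y}) :
    s ∈ Ioc 0 1 ∧ f s = y ∧ ∀ r ∈ Ioo 0 s, y < f r := by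
  set T := {r | r ∈ Ioc (0:ℝ) 1 ∧ f r = y}
  obtain ⟨u, hu, hfu⟩ : ∃ u > 0, ∀ r ∈ Ioo 0 u, y < f r := by
    have h := hf_tendsto.eventually_gt_atTop y
    rw [eventually_iff, mem_nhdsGT_iff_exists_Ioo_subset] at h
    obtain ⟨u, hu, hsub⟩ := h
    exact ⟨u, hu, fun r hr ↦ hsub hr⟩
  have hTu : ∀ x ∈ T, u ≤ x := fun x hx ↦ not_lt.1 fun h ↦ (hfu x ⟨hx.1.1, h⟩).ne' hx.2
  have hT : ∀ r ∈ Ioc 0 1, f r ≤ y → ∃ x ∈ T, x ≤ r := by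
    intro r hr hfr
    set t := min (u / 2) r
    have ht : t ∈ Ioo 0 u := ⟨lt_min (by linarith) hr.1, (min_le_left _ _).trans_lt (by linarith)⟩
    obtain ⟨x, hx, hfx⟩ := intermediate_value_Icc' (min_le_right _ _)
      (hf.mono fun x hx ↦ ⟨ht.1.trans_le hx.1, hx.2.trans hr.2⟩) ⟨hfr, (hfu t ht).le⟩
    exact ⟨x, ⟨⟨ht.1.trans_le hx.1, hx.2.trans hr.2⟩, hfx⟩, hx.2⟩
  have hbdd : BddBelow T := ⟨0, fun x hx ↦ hx.1.1.le⟩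
  have hclosed : IsClosed T := by
    have hTeq : T = Icc u 1 ∩ f ⁻¹' {y} := by
      ext x
      exact ⟨fun hx ↦ ⟨⟨hTu x hx, hx.1.2⟩, hx.2⟩, fun hx ↦ ⟨⟨hu.trans_le hx.1.1, hx.1.2⟩, hx.2⟩⟩
    rw [hTeq]
    exact (hf.mono fun x hx ↦ ⟨hu.trans_le hx.1, hx.2⟩).preimage_isClosed_of_isClosed
      isClosed_Icc isClosed_singleton
  obtain ⟨x, hxT, -⟩ := hT 1 ⟨one_pos, le_rfl⟩ hf1.le
  have hsT : s ∈ T := hs ▸ hclosed.csInf_mem ⟨x, hxT⟩ hbdd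
  refine ⟨hsT.1, hsT.2, fun r hr ↦ not_le.1 fun hfr ↦ ?_⟩
  obtain ⟨x, hxT, hxr⟩ := hT r ⟨hr.1, hr.2.le.trans hsT.1.2⟩ hfr
  exact (hxr.trans_lt hr.2).not_ge (hs ▸ csInf_le hbdd hxT)

theorem log_add_log_sub_lt_mul_neg_log {N a α s C₀ : ℝ} (hN : 2 ≤ N) (ha : 0 < a)
    (ha' : a ≤ 1 / 4) (hα : 0 < α) (hαC : α ≤ exp (-4) / C₀ ^ 2) (hC₀ : 0 < C₀)
    (hs : 0 < s) (hs1 : s ≤ 1) (hsC : s ≤ C₀ * a) :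
    log (1 / 2) + log α - 2 * log a + 25 / 16 + 2 * (1 + a ^ 2) < N * -log s := by
  have hlog_s : log s ≤ log C₀ + log a := by
    rw [← log_mul hC₀.ne' ha.ne']; exact log_le_log hs hsC
  have hlog_α : log α ≤ -4 - 2 * log C₀ := by
    have h := log_le_log hα hαC
    rwa [log_div (exp_pos _).ne' (by positivity), log_exp, log_pow, Nat.cast_ofNat] at h
  have hlog_half : log (1 / 2) < 0 := log_neg (by norm_num) (by norm_num)
  have hN_log : 2 * -log s ≤ N * -log s :=
    mul_le_mul_of_nonneg_right hN (neg_nonneg.2 (log_nonpos hs.le hs1))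
  nlinarith

theorem three_fifths_mul_le_integral_energyDensity {N s r : ℝ} {f f' : ℝ → ℝ}
    (hf : ∀ x ∈ Icc s 1, HasDerivAt f (f' x) x)
    (hE : IntegrableOn (energyDensity N f f') (Icc s 1))
    (hs : 0 < s) (hsr : s ≤ r) (hr : r ≤ 1) (hN : 0 ≤ N) (hf₀ : ∀ x ∈ Icc s 1, 0 ≤ f x)
    (hfs : f s = 1 / 2) (hfr : 2 ≤ f r) :
    3 / 5 * N ≤ ∫ x in s..1, energyDensity N f f' x := by
  have hsub : Icc s r ⊆ Icc s 1 := Icc_subset_Icc le_rfl hr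
  have hsr_int := abs_sub_le_integral_energyDensity (fun x hx ↦ hf x (hsub hx))
    (hE.mono_set hsub) hs hsr hN (fun x hx ↦ hf₀ x (hsub hx))
  have hfr_div : N / (1 + f r ^ 2) ≤ N / 5 :=
    div_le_div_of_nonneg_left hN (by norm_num) (by nlinarith)
  have hr1_int : 0 ≤ ∫ x in r..1, energyDensity N f f' x :=
    integral_nonneg hr fun x hx ↦ energyDensity_nonneg N f f' (hs.le.trans (hsr.trans hx.1))
  rw [← integral_add_adjacent_intervals
    ((intervalIntegrable_iff_integrableOn_Icc_of_le hsr).2 (hE.mono_set hsub))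
    ((intervalIntegrable_iff_integrableOn_Icc_of_le hr).2
      (hE.mono_set (Icc_subset_Icc hsr le_rfl)))]
  rw [hfs] at hsr_int
  have := le_abs_self (N / (1 + (1 / 2) ^ 2) - N / (1 + f r ^ 2))
  have e : N / (1 + (1 / 2) ^ 2) = 4 / 5 * N := by norm_num; ring
  linarith

theorem lt_integral_energyDensity_of_lt_two {N a α s m : ℝ} {f f' : ℝ → ℝ}
    (hf : ∀ x ∈ Icc s 1, HasDerivAt f (f' x) x)
    (hE : IntegrableOn (energyDensity N f f') (Icc s 1))
    (hN : 0 < N) (hs : 0 < s) (hsm : s ≤ m) (hm : m ≤ 1) (ha : 0 < a) (haα : a ≤ α)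
    (hα : α ≤ 1 / 2) (hfs : f s = 1 / 2) (hfm : f m = a) (hf1 : f 1 = α)
    (hmin : ∀ x ∈ Icc s 1, a ≤ f x) (hlt : ∀ x ∈ Icc s 1, f x < 2)
    (hgap : log (1 / 2) + log α - 2 * log a + 25 / 16 + 2 * (1 + a ^ 2) < N * -log s) :
    2 * N - N / (1 + α ^ 2) - 4 / 5 * N < ∫ x in s..1, energyDensity N f f' x := by
  set c := (N * a / (1 + a ^ 2)) ^ 2 with hc
  have hS : ∀ x, HasDerivAt (fun y ↦ ∫ t in a..y, calibrationDensity N c t)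
      (calibrationDensity N c x) x := fun x ↦
    ((continuous_calibrationDensity N c).integral_hasStrictDerivAt a x).hasDerivAt
  have hdip := le_integral_energyDensity_of_admissible hf hS hE hs hsm hm fun x hx ↦
    sq_mul_div_one_add_sq_mul_le N ha (hmin x hx)
      (by nlinarith [mul_lt_mul_of_pos_left (hlt x hx) ha])
  simp only [hfs, hfm, hf1, log_one, integral_same] at hdip
  have h_half := le_integral_calibrationDensity hN ha (by linarith) le_rfl
  have h_α := le_integral_calibrationDensity hN ha haα hα
  rw [← hc] at h_half h_α
  have hcN : 0 < c / N := by positivity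
  have key := mul_lt_mul_of_pos_left hgap hcN
  have e₁ : c / N * (N * -log s) = c * -log s := by field_simp
  have e₂ : c / N * (2 * (1 + a ^ 2)) = 2 * N - 2 * (N / (1 + a ^ 2)) := by
    simp only [c]; field_simp; ring
  have e₃ : N / (1 + (1 / 2) ^ 2) = 4 / 5 * N := by norm_num; ring
  linarith

theorem two_mul_sub_div_one_add_sq_lt_integral_energyDensity {N C₀ α a s m : ℝ}
    {f f' : ℝ → ℝ} (hN : 2 ≤ N) (hC₀ : 0 < C₀) (hα : 0 < α) (hα₄ : α ≤ 1 / 4)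
    (hαC : α ≤ exp (-4) / C₀ ^ 2) (hf : ∀ r ∈ Ioc 0 1, HasDerivAt f (f' r) r)
    (hE : IntegrableOn (energyDensity N f f') (Icc 0 1)) (hf_tendsto : Tendsto f (𝓝[>] 0) atTop)
    (hf1 : f 1 = α) (ha : 0 < a) (hmin : ∀ r ∈ Ioc 0 1, a ≤ f r) (hm : m ∈ Ioc 0 1)
    (hfm : f m = a) (hs : s ∈ Ioc 0 1) (hfs : f s = 1 / 2) (hsm : s ≤ m) (hsC : s ≤ C₀ * a) :
    2 * N - N / (1 + α ^ 2) < ∫ r in (0 : ℝ)..1, energyDensity N f f' r := by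
  obtain ⟨hs₀, hs₁⟩ := hs
  have haα : a ≤ α := hf1 ▸ hmin 1 ⟨one_pos, le_rfl⟩
  have hf₀ : ∀ r ∈ Ioc 0 1, 0 ≤ f r := fun r hr ↦ (ha.trans_le (hmin r hr)).le
  have hIcc : ∀ r ∈ Icc s 1, r ∈ Ioc 0 1 := fun r hr ↦ ⟨hs₀.trans_le hr.1, hr.2⟩
  have hE₁ : IntegrableOn (energyDensity N f f') (Icc 0 s) :=
    hE.mono_set (Icc_subset_Icc le_rfl hs₁)
  have hE₂ : IntegrableOn (energyDensity N f f') (Icc s 1) :=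
    hE.mono_set (Icc_subset_Icc hs₀.le le_rfl)
  have hcap := div_one_add_sq_le_integral_energyDensity (fun r hr ↦ hf r ⟨hr.1, hr.2.trans hs₁⟩)
    hE₁ hs₀ (by positivity) (fun r hr ↦ hf₀ r ⟨hr.1, hr.2.trans hs₁⟩) hf_tendsto
  have hcap' : N / (1 + f s ^ 2) = 4 / 5 * N := by rw [hfs]; norm_num; ring
  rw [← integral_add_adjacent_intervals
    ((intervalIntegrable_iff_integrableOn_Icc_of_le hs₀.le).2 hE₁)
    ((intervalIntegrable_iff_integrableOn_Icc_of_le hs₁).2 hE₂)]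
  by_cases hreach : ∃ r ∈ Icc s 1, 2 ≤ f r
  · obtain ⟨r, hr, hfr⟩ := hreach
    have hA := three_fifths_mul_le_integral_energyDensity (fun x hx ↦ hf x (hIcc x hx)) hE₂ hs₀
      hr.1 hr.2 (by positivity) (fun x hx ↦ hf₀ x (hIcc x hx)) hfs hfr
    have : 3 / 5 * N < N / (1 + α ^ 2) := by
      have : α ^ 2 ≤ 1 / 16 := by nlinarith
      rw [lt_div_iff₀ (by positivity)]; nlinarith
    linarith
  · push Not at hreach
    have hB := lt_integral_energyDensity_of_lt_two (fun x hx ↦ hf x (hIcc x hx)) hE₂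
      (by positivity) hs₀ hsm hm.2 ha haα (by linarith) hfs hfm hf1
      (fun x hx ↦ hmin x (hIcc x hx)) hreach
      (log_add_log_sub_lt_mul_neg_log hN ha (by linarith) hα hαC hC₀ hs₀ hs₁ hsC)
    linarith

/-- key proposition: fix `n ≥ 2` and a constant `C₀ > 0`.
There is `α₀ ∈ (0,1/4]` such that for all `0 < α ≤ α₀`, any `n`-axially
symmetric `W^{1,2}` map on the unit disc with profile `f` satisfying
`f(1) = α`, `f(r) → ∞` as `r → 0⁺`, `min f = a > 0`, and
`s := inf{r ∈ (0,1] : f(r) = 1/2} ≤ C₀ a`, has Dirichlet energy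
`(1/2)∫_{D₁}|∇u|² = 4π ∫₀¹ (f′² + n²f²/r²)/(1+f²)² r dr`
strictly larger than `4πn + 4πn α²/(1+α²)`. -/
theorem stmt15 (n : ℕ) (hn : 2 ≤ n) (C₀ : ℝ) (hC₀ : 0 < C₀) :
    ∃ α₀ : ℝ, 0 < α₀ ∧ α₀ ≤ 1/4 ∧
      ∀ α : ℝ, 0 < α → α ≤ α₀ →
      ∀ f f' : ℝ → ℝ, ∀ a s : ℝ,
        (∀ r ∈ Ioc (0:ℝ) 1, HasDerivAt f (f' r) r) →
        f 1 = α →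
        Filter.Tendsto f (nhdsWithin 0 (Ioi 0)) Filter.atTop →
        0 < a →
        (∀ r ∈ Ioc (0:ℝ) 1, a ≤ f r) →
        (∃ r ∈ Ioc (0:ℝ) 1, f r = a) →
        s = sInf {r | r ∈ Ioc (0:ℝ) 1 ∧ f r = 1/2} →
        s ≤ C₀ * a →
        IntervalIntegrable
          (fun r => ((f' r) ^ 2 + (n : ℝ) ^ 2 * (f r) ^ 2 / r ^ 2) / (1 + (f r) ^ 2) ^ 2 * r)
          volume 0 1 →
        4 * π * (∫ r in (0:ℝ)..1,
            ((f' r) ^ 2 + (n : ℝ) ^ 2 * (f r) ^ 2 / r ^ 2) / (1 + (f r) ^ 2) ^ 2 * r)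
          > 4 * π * (n : ℝ) + 4 * π * (n : ℝ) * α ^ 2 / (1 + α ^ 2) := by
  refine ⟨min (1 / 4) (exp (-4) / C₀ ^ 2), by positivity, min_le_left _ _, ?_⟩
  intro α hα hαα₀ f f' a s hf hf1 hf_tendsto ha hmin ⟨m, hm, hfm⟩ hs hsC hE
  have hα₄ : α ≤ 1 / 4 := hαα₀.trans (min_le_left _ _)
  obtain ⟨hs₀₁, hfs, hf_gt⟩ := sInf_levelSet_spec
    (fun r hr ↦ (hf r hr).continuousAt.continuousWithinAt) hf_tendsto
    (by linarith [hmin 1 ⟨one_pos, le_rfl⟩]) hs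
  have hsm : s ≤ m := not_lt.1 fun h ↦ by linarith [hf_gt m ⟨hm.1, h⟩, hmin 1 ⟨one_pos, le_rfl⟩]
  have htarget : 4 * π * (n : ℝ) + 4 * π * n * α ^ 2 / (1 + α ^ 2) =
      4 * π * (2 * n - n / (1 + α ^ 2)) := by
    field_simp; ring
  change 4 * π * (∫ r in (0:ℝ)..1, energyDensity n f f' r) > _
  rw [gt_iff_lt, htarget]
  exact mul_lt_mul_of_pos_left (two_mul_sub_div_one_add_sq_lt_integral_energyDensity
    (by exact_mod_cast hn) hC₀ hα hα₄ (hαα₀.trans (min_le_right _ _)) hf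
    ((intervalIntegrable_iff_integrableOn_Icc_of_le zero_le_one).1 hE) hf_tendsto hf1 ha hmin
    hm hfm hs₀₁ hfs hsm hsC) (by positivity)
end
end

section
/- Let n ≥ 1, 0 < s < s̃, 0 < a < b, and let t₀ > s be the unique radius with η′_{t₀}(t₀)=0 for the two-parameter family η_t(r)=A_t rⁿ + B_t r⁻ⁿ interpolating η_t(s)=b, η_t(t)=a. If t₀ ≥ s̃, then η_{s̃} is nonincreasing on [s,s̃]; the function g̃ defined by g̃ = η_{s̃} (if t₀ ≥ s̃), or g̃ = η_{t₀} on [s,t₀] and g̃ ≡ a on [t₀,s̃] (if t₀ < s̃), is the unique minimizer of Ĩ(g) = ∫_s^{s̃} (g′ + (n/r)g)² r dr over 𝒞₁ = {g ∈ W^{1,2}([s,s̃]) : g(s)=b, g(s̃)=a, g′ ≤ 0}. -/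
open MeasureTheory Real Set

noncomputable section

/-- The interpolating family `η_t(r) = A_t rⁿ + B_t r⁻ⁿ` with `η_t(s) = b`,
`η_t(t) = a`. -/
def eta (n : ℕ) (s a b t : ℝ) (r : ℝ) : ℝ :=
  (a * t ^ n - b * s ^ n) / (t ^ (2 * n) - s ^ (2 * n)) * r ^ (n : ℤ)
    + s ^ n * t ^ n * (b * t ^ n - a * s ^ n) / (t ^ (2 * n) - s ^ (2 * n)) * r ^ (-(n : ℤ))

/-- The admissible class `𝒞₁` on `[s, st]`: absolutely continuous `g` with
square-integrable derivative `G ≤ 0`, `g(s) = b`, `g(st) = a`. -/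
def Adm1 (s st a b : ℝ) (g G : ℝ → ℝ) : Prop :=
  (∀ x ∈ Set.Icc s st, g x = b + ∫ t in s..x, G t) ∧
  IntervalIntegrable G volume s st ∧
  IntervalIntegrable (fun r => (G r) ^ 2) volume s st ∧
  g s = b ∧ g st = a ∧ (∀ x ∈ Set.Icc s st, G x ≤ 0)

/-- The functional `Ĩ(g) = ∫_s^{st} (g′ + (n/r)g)² r dr`. -/
def Itilde (n : ℕ) (s st : ℝ) (g G : ℝ → ℝ) : ℝ :=
  ∫ r in s..st, (G r + (n : ℝ) / r * g r) ^ 2 * r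

/-!
`Ĩ` is a convex quadratic functional, so a function `g̃ ∈ 𝒞₁` minimizes it as soon as its first
variation `∫ (g̃′ + (n/r) g̃)(φ′ + (n/r) φ) r dr` towards every admissible `g = g̃ + φ` is
nonnegative; equality forces `φ′ + (n/r) φ = 0` with `φ(s) = 0`, hence `φ = 0`.
Since `(η_t′ + (n/r) η_t) r = 2 n A_t rⁿ`, the first variation over `[s, τ]` integrates by parts to
`2 n A_t τⁿ φ(τ)`. For `g̃ = η_{s̃}` this vanishes because `φ(s̃) = 0`. For the glued candidate the
criticality of `t₀` gives `2 A_{t₀} t₀ⁿ = a`, so the boundary term at `t₀` cancels against the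
constant piece, leaving `n² a ∫_{t₀}^{s̃} (g - a)/r dr ≥ 0` as `g ≥ a` there.
Both candidates are nonincreasing because `η_t′(t)` has the sign of a quadratic in `tⁿ` whose
larger root is `t₀ⁿ`.
-/

open Filter

theorem natCast_mul_pow_sub_one {x : ℝ} (hx : x ≠ 0) (n : ℕ) :
    (n : ℝ) * x ^ (n - 1) = x ^ n * (n / x) := by
  rcases n with _ | n
  · simp
  · field_simp
    simp [pow_succ]

theorem hasDerivAt_comp_min {f f' : ℝ → ℝ} {t r : ℝ}
    (hf : HasDerivAt f (f' (min r t)) (min r t)) (ht : f' t = 0) :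
    HasDerivAt (fun x ↦ f (min x t)) (f' (min r t)) r := by
  rcases lt_trichotomy r t with hrt | rfl | hrt
  · rw [min_eq_left hrt.le] at hf ⊢
    exact hf.congr_of_eventuallyEq <| eventually_of_mem (Iio_mem_nhds hrt) fun x hx ↦ by
      simp [min_eq_left (le_of_lt (mem_Iio.1 hx))]
  · rw [min_self, ht] at hf ⊢
    have hleft : HasDerivWithinAt (fun x ↦ f (min x r)) 0 (Iic r) r :=
      hf.hasDerivWithinAt.congr (fun x hx ↦ by simp [min_eq_left (mem_Iic.1 hx)]) (by simp)
    have hright : HasDerivWithinAt (fun x ↦ f (min x r)) 0 (Ici r) r :=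
      (hasDerivWithinAt_const r _ (f r)).congr (fun x hx ↦ by simp [min_eq_right (mem_Ici.1 hx)])
        (by simp)
    simpa [Iic_union_Ici] using hleft.union hright
  · rw [min_eq_right hrt.le, ht]
    exact (hasDerivAt_const r (f t)).congr_of_eventuallyEq <|
      eventually_of_mem (Ioi_mem_nhds hrt) fun x hx ↦ by
        simp [min_eq_right (le_of_lt (mem_Ioi.1 hx))]

theorem integral_pow_mul_add_primitive (n : ℕ) {s t : ℝ} {χ : ℝ → ℝ}
    (hχ : IntervalIntegrable χ volume s t) :
    ∫ r in s..t, (r ^ n * χ r + n * r ^ (n - 1) * ∫ u in s..r, χ u)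
      = t ^ n * ∫ u in s..t, χ u := by
  have h := AbsolutelyContinuousOnInterval.integral_deriv_mul_eq_sub
    (contDiff_id.pow n).contDiffOn.absolutelyContinuousOnInterval
    (hχ.absolutelyContinuousOnInterval_intervalIntegral left_mem_uIcc)
  simp only [id, intervalIntegral.integral_same, mul_zero, sub_zero] at h
  rw [← h]
  refine intervalIntegral.integral_congr_ae ?_
  filter_upwards [hχ.ae_hasDerivAt_integral] with x hx hmem
  rw [(hasDerivAt_pow n x).deriv, (hx (uIoc_subset_uIcc hmem) s left_mem_uIcc).deriv]
  ring

section Integrability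

variable {s t : ℝ} {G c w : ℝ → ℝ}

theorem intervalIntegrable_add_mul (hG : IntervalIntegrable G volume s t)
    (hc : ContinuousOn c (uIcc s t)) (hw : ContinuousOn w (uIcc s t)) :
    IntervalIntegrable (fun r ↦ (G r + c r) * w r) volume s t := by
  simp only [add_mul]
  exact (hG.mul_continuousOn hw).add ((hc.mul hw).intervalIntegrable)

theorem intervalIntegrable_add_sq_mul (hG : IntervalIntegrable G volume s t)
    (hG2 : IntervalIntegrable (fun r ↦ G r ^ 2) volume s t)
    (hc : ContinuousOn c (uIcc s t)) (hw : ContinuousOn w (uIcc s t)) :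
    IntervalIntegrable (fun r ↦ (G r + c r) ^ 2 * w r) volume s t := by
  have hcw : ContinuousOn (fun r ↦ 2 * c r * w r) (uIcc s t) := by fun_prop
  have hc2w : ContinuousOn (fun r ↦ c r ^ 2 * w r) (uIcc s t) := by fun_prop
  have h := (hG2.mul_continuousOn hw).add ((hG.mul_continuousOn hcw).add hc2w.intervalIntegrable)
  convert h using 2
  ring

end Integrability

-- the coefficients `A_t`, `B_t` of `η_t`
def etaA (n : ℕ) (s a b t : ℝ) : ℝ :=
  (a * t ^ n - b * s ^ n) / (t ^ (2 * n) - s ^ (2 * n))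

def etaB (n : ℕ) (s a b t : ℝ) : ℝ :=
  s ^ n * t ^ n * (b * t ^ n - a * s ^ n) / (t ^ (2 * n) - s ^ (2 * n))

def etaDeriv (n : ℕ) (s a b t r : ℝ) : ℝ :=
  n * (etaA n s a b t * r ^ ((n : ℤ) - 1) - etaB n s a b t * r ^ (-(n : ℤ) - 1))

section Eta

variable {n : ℕ} {s a b t r : ℝ}

theorem eta_eq : eta n s a b t r = etaA n s a b t * r ^ (n : ℤ) + etaB n s a b t * r ^ (-(n : ℤ)) :=
  rfl

theorem hasDerivAt_eta (hr : r ≠ 0) : HasDerivAt (eta n s a b t) (etaDeriv n s a b t r) r := by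
  have h := ((hasDerivAt_zpow (n : ℤ) r (.inl hr)).const_mul (etaA n s a b t)).add
    ((hasDerivAt_zpow (-(n : ℤ)) r (.inl hr)).const_mul (etaB n s a b t))
  refine h.congr_deriv ?_
  rw [etaDeriv]
  push_cast
  ring

theorem continuousAt_etaDeriv (hr : r ≠ 0) : ContinuousAt (etaDeriv n s a b t) r := by
  unfold etaDeriv
  fun_prop (disch := exact .inl hr)

theorem pow_two_mul_sub_pow_two_mul_pos (hn : n ≠ 0) (hs : 0 < s) (hst : s < t) :
    0 < t ^ (2 * n) - s ^ (2 * n) :=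
  sub_pos.2 (pow_lt_pow_left₀ hst hs.le (by omega))

theorem eta_left (hn : n ≠ 0) (hs : 0 < s) (hst : s < t) : eta n s a b t s = b := by
  have hD := (pow_two_mul_sub_pow_two_mul_pos hn hs hst).ne'
  have : s ^ n ≠ 0 := by positivity
  rw [eta_eq, etaA, etaB, zpow_neg, zpow_natCast]
  field_simp
  ring

theorem eta_right (hn : n ≠ 0) (hs : 0 < s) (hst : s < t) : eta n s a b t t = a := by
  have hD := (pow_two_mul_sub_pow_two_mul_pos hn hs hst).ne'
  have : t ^ n ≠ 0 := by have := hs.trans hst; positivity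
  rw [eta_eq, etaA, etaB, zpow_neg, zpow_natCast]
  field_simp
  ring

theorem etaDeriv_eq (hr : r ≠ 0) :
    etaDeriv n s a b t r =
      n * r ^ (-(n : ℤ) - 1) * (etaA n s a b t * r ^ (2 * n) - etaB n s a b t) := by
  have : r ^ ((n : ℤ) - 1) = r ^ (2 * n) * r ^ (-(n : ℤ) - 1) := by
    rw [← zpow_natCast, ← zpow_add₀ hr]
    push_cast
    ring_nf
  rw [etaDeriv, this]
  ring

theorem etaDeriv_add_div_mul_eta_mul (hr : r ≠ 0) :
    (etaDeriv n s a b t r + n / r * eta n s a b t r) * r = 2 * n * etaA n s a b t * r ^ n := by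
  rw [eta_eq, etaDeriv, zpow_sub_one₀ hr, zpow_sub_one₀ hr, zpow_neg, zpow_natCast]
  field_simp
  ring

theorem etaDeriv_self (ht : t ≠ 0) :
    etaDeriv n s a b t t = n * (a * (t ^ n) ^ 2 + a * (s ^ n) ^ 2 - 2 * b * s ^ n * t ^ n)
      / (t * (t ^ (2 * n) - s ^ (2 * n))) := by
  rw [etaDeriv, etaA, etaB, zpow_sub_one₀ ht, zpow_sub_one₀ ht, zpow_neg, zpow_natCast]
  have : t ^ n ≠ 0 := pow_ne_zero n ht
  field_simp
  ring

end Eta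

section EtaMonotone

variable {n : ℕ} {s a b t t₀ r : ℝ}

theorem etaB_pos (hn : n ≠ 0) (hs : 0 < s) (hst : s < t) (ha : 0 < a) (hab : a < b) :
    0 < etaB n s a b t := by
  have hsn : 0 < s ^ n := pow_pos hs n
  have hstn : s ^ n < t ^ n := pow_lt_pow_left₀ hst hs.le hn
  refine div_pos (mul_pos (mul_pos hsn (hsn.trans hstn)) ?_)
    (pow_two_mul_sub_pow_two_mul_pos hn hs hst)
  nlinarith

theorem etaDeriv_nonpos_of_self (hr : 0 < r) (hrt : r ≤ t) (hB : 0 ≤ etaB n s a b t)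
    (ht : etaDeriv n s a b t t ≤ 0) : etaDeriv n s a b t r ≤ 0 := by
  rcases Nat.eq_zero_or_pos n with rfl | hn
  · simp [etaDeriv]
  have hpos : ∀ x : ℝ, 0 < x → 0 < (n : ℝ) * x ^ (-(n : ℤ) - 1) := fun x hx ↦
    mul_pos (Nat.cast_pos.2 hn) (zpow_pos hx _)
  have hAt : etaA n s a b t * t ^ (2 * n) ≤ etaB n s a b t := by
    rw [etaDeriv_eq (hr.trans_le hrt).ne'] at ht
    linarith [nonpos_of_mul_nonpos_right ht (hpos t (hr.trans_le hrt))]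
  have hAr : etaA n s a b t * r ^ (2 * n) ≤ etaB n s a b t := by
    rcases le_or_gt (etaA n s a b t) 0 with hA | hA
    · nlinarith [pow_nonneg hr.le (2 * n)]
    · nlinarith [pow_le_pow_left₀ hr.le hrt (2 * n)]
  rw [etaDeriv_eq hr.ne']
  exact mul_nonpos_of_nonneg_of_nonpos (hpos r hr).le (by linarith)

/-- The roots of `a u² - 2 b v u + a v²` have product `v²`, so a root `u₀ ≥ v` is the larger one. -/
theorem mul_sq_add_mul_sq_le_of_root {v u u₀ : ℝ} (ha : 0 ≤ a) (hv : 0 ≤ v) (hvu : v ≤ u)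
    (huu₀ : u ≤ u₀) (hroot : a * u₀ ^ 2 + a * v ^ 2 = 2 * b * v * u₀) :
    a * u ^ 2 + a * v ^ 2 ≤ 2 * b * v * u := by
  have hfactor :
      u₀ * (a * u ^ 2 + a * v ^ 2 - 2 * b * v * u) = a * (u₀ - u) * (v ^ 2 - u * u₀) := by
    linear_combination u * hroot
  have hsign : a * (u₀ - u) * (v ^ 2 - u * u₀) ≤ 0 :=
    mul_nonpos_of_nonneg_of_nonpos (mul_nonneg ha (sub_nonneg.2 huu₀))
      (by nlinarith [mul_le_mul hvu (hvu.trans huu₀) hv (hv.trans hvu)])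
  rcases (hv.trans (hvu.trans huu₀)).eq_or_lt with hu₀ | hu₀
  · obtain rfl : u = 0 := by linarith
    obtain rfl : v = 0 := by linarith
    simp
  · nlinarith

theorem etaDeriv_nonpos (hn : n ≠ 0) (hs : 0 < s) (hst : s < t) (htt₀ : t ≤ t₀) (ha : 0 < a)
    (hab : a < b) (hroot : a * (t₀ ^ n) ^ 2 + a * (s ^ n) ^ 2 = 2 * b * s ^ n * t₀ ^ n)
    (hr : r ∈ Icc s t) : etaDeriv n s a b t r ≤ 0 := by
  have ht : 0 < t := hs.trans hst
  refine etaDeriv_nonpos_of_self (hs.trans_le hr.1) hr.2 (etaB_pos hn hs hst ha hab).le ?_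
  have hq := mul_sq_add_mul_sq_le_of_root ha.le (pow_nonneg hs.le n)
    (pow_le_pow_left₀ hs.le hst.le n) (pow_le_pow_left₀ ht.le htt₀ n) hroot
  rw [etaDeriv_self ht.ne']
  exact div_nonpos_of_nonpos_of_nonneg (mul_nonpos_of_nonneg_of_nonpos (by positivity)
    (by linarith)) (mul_pos ht (pow_two_mul_sub_pow_two_mul_pos hn hs hst)).le

theorem root_of_etaDeriv_self_eq_zero (hn : n ≠ 0) (hs : 0 < s) (hst : s < t)
    (h : etaDeriv n s a b t t = 0) :
    a * (t ^ n) ^ 2 + a * (s ^ n) ^ 2 = 2 * b * s ^ n * t ^ n := by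
  have ht : 0 < t := hs.trans hst
  rw [etaDeriv_self ht.ne', div_eq_zero_iff, mul_eq_zero] at h
  rcases h with (h | h) | h
  · exact absurd h (Nat.cast_ne_zero.2 hn)
  · linarith
  · exact absurd h (mul_pos ht (pow_two_mul_sub_pow_two_mul_pos hn hs hst)).ne'

theorem two_mul_etaA_mul_pow_self (hn : n ≠ 0) (hs : 0 < s) (hst : s < t)
    (h : etaDeriv n s a b t t = 0) : 2 * etaA n s a b t * t ^ n = a := by
  have ht : 0 < t := hs.trans hst
  have hB : etaB n s a b t = etaA n s a b t * t ^ (2 * n) := by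
    rw [etaDeriv_eq ht.ne'] at h
    have : (n : ℝ) * t ^ (-(n : ℤ) - 1) ≠ 0 := by positivity
    linarith [(mul_eq_zero.1 h).resolve_left this]
  have htn : t ^ n ≠ 0 := by positivity
  have h' := eta_right (a := a) (b := b) hn hs hst
  rw [eta_eq, hB, zpow_neg, zpow_natCast, pow_mul'] at h'
  field_simp at h'
  linarith

end EtaMonotone

namespace Adm1

variable {s st a b : ℝ} {g G g₀ G₀ : ℝ → ℝ}

theorem intervalIntegrable_of_mem (hg : Adm1 s st a b g G) {x : ℝ} (hx : x ∈ Icc s st) :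
    IntervalIntegrable G volume s x :=
  hg.2.1.mono_set (uIcc_subset_uIcc left_mem_uIcc (Icc_subset_uIcc hx))

theorem integral_eq_sub (hg : Adm1 s st a b g G) {x y : ℝ} (hx : x ∈ Icc s st)
    (hy : y ∈ Icc s st) : ∫ u in x..y, G u = g y - g x := by
  rw [hg.1 y hy, hg.1 x hx, ← intervalIntegral.integral_interval_sub_left
    (hg.intervalIntegrable_of_mem hy) (hg.intervalIntegrable_of_mem hx)]
  ring

theorem sub_eq_integral (hg : Adm1 s st a b g G) (h₀ : Adm1 s st a b g₀ G₀) {x : ℝ}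
    (hx : x ∈ Icc s st) : g x - g₀ x = ∫ u in s..x, (G u - G₀ u) := by
  rw [hg.1 x hx, h₀.1 x hx, intervalIntegral.integral_sub (hg.intervalIntegrable_of_mem hx)
    (h₀.intervalIntegrable_of_mem hx)]
  ring

theorem continuousOn (hg : Adm1 s st a b g G) : ContinuousOn g (Icc s st) :=
  (continuousOn_const.add ((intervalIntegral.continuousOn_primitive_interval' hg.2.1
    left_mem_uIcc).mono Icc_subset_uIcc)).congr hg.1

theorem antitoneOn (hg : Adm1 s st a b g G) : AntitoneOn g (Icc s st) := by
  intro x hx y hy hxy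
  have hGxy : IntervalIntegrable G volume x y :=
    hg.2.1.mono_set (uIcc_subset_uIcc (Icc_subset_uIcc hx) (Icc_subset_uIcc hy))
  have : ∫ u in x..y, G u ≤ ∫ _ in x..y, (0 : ℝ) :=
    intervalIntegral.integral_mono_on hxy hGxy intervalIntegrable_const
      fun u hu ↦ hg.2.2.2.2.2 u ⟨hx.1.trans hu.1, hu.2.trans hy.2⟩
  rw [hg.integral_eq_sub hx hy, intervalIntegral.integral_zero] at this
  linarith

theorem of_hasDerivAt (hsst : s ≤ st) (hd : ∀ x ∈ Icc s st, HasDerivAt g (G x) x)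
    (hG : ContinuousOn G (Icc s st)) (hgs : g s = b) (hgst : g st = a)
    (hG_nonpos : ∀ x ∈ Icc s st, G x ≤ 0) : Adm1 s st a b g G := by
  have hint : ∀ x ∈ Icc s st, IntervalIntegrable G volume s x := fun x hx ↦
    (hG.mono (Icc_subset_Icc_right hx.2)).intervalIntegrable_of_Icc hx.1
  refine ⟨fun x hx ↦ ?_, hint st ⟨hsst, le_rfl⟩, ?_, hgs, hgst, hG_nonpos⟩
  · rw [intervalIntegral.integral_eq_sub_of_hasDerivAt (fun y hy ↦ hd y ?_) (hint x hx), hgs]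
    · ring
    · rw [uIcc_of_le hx.1] at hy
      exact ⟨hy.1, hy.2.trans hx.2⟩
  · exact (hG.pow 2).intervalIntegrable_of_Icc hsst

end Adm1

section Variational

variable {n : ℕ} {s st a b : ℝ} {g G g₀ G₀ : ℝ → ℝ}

def firstVariation (n : ℕ) (s st : ℝ) (g₀ G₀ g G : ℝ → ℝ) : ℝ :=
  ∫ r in s..st, (G₀ r + n / r * g₀ r) * ((G r - G₀ r) + n / r * (g r - g₀ r)) * r

def IsUniqueMinimizer (n : ℕ) (s st a b : ℝ) (g₀ G₀ : ℝ → ℝ) : Prop :=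
  Adm1 s st a b g₀ G₀ ∧ ∀ g G : ℝ → ℝ, Adm1 s st a b g G →
    Itilde n s st g₀ G₀ ≤ Itilde n s st g G ∧
    (Itilde n s st g₀ G₀ = Itilde n s st g G → EqOn g g₀ (Icc s st))

theorem continuousOn_div_mul (hs : 0 < s) (hg : ContinuousOn g (Icc s st)) :
    ContinuousOn (fun r ↦ n / r * g r) (Icc s st) :=
  (continuousOn_const.div continuousOn_id fun _ hr ↦ (hs.trans_le hr.1).ne').mul hg

theorem intervalIntegrable_variation (hs : 0 < s) (hsst : s ≤ st) (hg : Adm1 s st a b g G)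
    (h₀ : Adm1 s st a b g₀ G₀) (hG₀ : ContinuousOn G₀ (Icc s st)) :
    IntervalIntegrable
      (fun r ↦ (G₀ r + n / r * g₀ r) * ((G r - G₀ r) + n / r * (g r - g₀ r)) * r) volume s st := by
  have hc : ContinuousOn (fun r ↦ -G₀ r + n / r * (g r - g₀ r)) (Icc s st) :=
    hG₀.neg.add (continuousOn_div_mul hs (hg.continuousOn.sub h₀.continuousOn))
  have hw : ContinuousOn (fun r ↦ (G₀ r + n / r * g₀ r) * r) (Icc s st) :=
    (hG₀.add (continuousOn_div_mul hs h₀.continuousOn)).mul continuousOn_id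
  rw [← uIcc_of_le hsst] at hc hw
  convert intervalIntegrable_add_mul hg.2.1 hc hw using 2
  ring

theorem intervalIntegrable_variation_sq (hs : 0 < s) (hsst : s ≤ st) (hg : Adm1 s st a b g G)
    (h₀ : Adm1 s st a b g₀ G₀) (hG₀ : ContinuousOn G₀ (Icc s st)) :
    IntervalIntegrable (fun r ↦ ((G r - G₀ r) + n / r * (g r - g₀ r)) ^ 2 * r) volume s st := by
  have hc : ContinuousOn (fun r ↦ -G₀ r + n / r * (g r - g₀ r)) (Icc s st) :=
    hG₀.neg.add (continuousOn_div_mul hs (hg.continuousOn.sub h₀.continuousOn))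
  rw [← uIcc_of_le hsst] at hc
  convert intervalIntegrable_add_sq_mul hg.2.1 hg.2.2.1 hc (continuousOn_id' _) using 2
  ring

theorem Itilde_eq_add_firstVariation (hs : 0 < s) (hsst : s ≤ st) (hg : Adm1 s st a b g G)
    (h₀ : Adm1 s st a b g₀ G₀) (hG₀ : ContinuousOn G₀ (Icc s st)) :
    Itilde n s st g G = Itilde n s st g₀ G₀ + 2 * firstVariation n s st g₀ G₀ g G
      + ∫ r in s..st, ((G r - G₀ r) + n / r * (g r - g₀ r)) ^ 2 * r := by
  have hψ : ContinuousOn (fun r ↦ (G₀ r + n / r * g₀ r) ^ 2 * r) (Icc s st) :=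
    ((hG₀.add (continuousOn_div_mul hs h₀.continuousOn)).pow 2).mul continuousOn_id
  rw [← uIcc_of_le hsst] at hψ
  have hvar := (intervalIntegrable_variation (n := n) hs hsst hg h₀ hG₀).const_mul 2
  rw [Itilde, Itilde, firstVariation, ← intervalIntegral.integral_const_mul,
    ← intervalIntegral.integral_add hψ.intervalIntegrable hvar,
    ← intervalIntegral.integral_add (hψ.intervalIntegrable.add hvar)
      (intervalIntegrable_variation_sq hs hsst hg h₀ hG₀)]
  congr 1 with r
  ring

/-- `r ↦ rⁿ ∫ₛʳ χ` is absolutely continuous with derivative `rⁿ (χ r + (n/r) ∫ₛʳ χ) = 0` a.e. -/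
theorem integral_eq_zero_of_ae_add_div_mul_eq_zero (hs : 0 < s) (hsst : s ≤ st) {χ : ℝ → ℝ}
    (hχ : IntervalIntegrable χ volume s st)
    (h : ∀ᵐ r, r ∈ Ioc s st → χ r + n / r * ∫ u in s..r, χ u = 0) :
    ∀ x ∈ Icc s st, ∫ u in s..x, χ u = 0 := by
  set Φ : ℝ → ℝ := fun x ↦ ∫ u in s..x, χ u
  have hF : AbsolutelyContinuousOnInterval (fun x ↦ x ^ n * Φ x) s st :=
    ((contDiff_id.pow n).contDiffOn.absolutelyContinuousOnInterval).mul
      (hχ.absolutelyContinuousOnInterval_intervalIntegral left_mem_uIcc)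
  have hF' : ∀ᵐ x, x ∈ uIcc s st → HasDerivAt (fun x ↦ x ^ n * Φ x) 0 x := by
    have hne : ∀ᵐ x : ℝ, x ≠ s := by simp [ae_iff, measure_singleton]
    filter_upwards [hχ.ae_hasDerivAt_integral, h, hne] with x hΦ hx hxs hmem
    rw [uIcc_of_le hsst] at hmem
    have hx0 : x ≠ 0 := (hs.trans_le hmem.1).ne'
    refine ((hasDerivAt_pow n x).mul (hΦ (Icc_subset_uIcc hmem) s left_mem_uIcc)).congr_deriv ?_
    rw [natCast_mul_pow_sub_one hx0]
    linear_combination x ^ n * hx ⟨lt_of_le_of_ne hmem.1 (Ne.symm hxs), hmem.2⟩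
  obtain ⟨C, hC⟩ := hF.const_of_ae_hasDerivAt_zero hF'
  intro x hx
  have hCs := hC s left_mem_uIcc
  have hCx := hC x (Icc_subset_uIcc hx)
  simp only [Φ, intervalIntegral.integral_same, mul_zero] at hCs
  rw [← hCs] at hCx
  exact (mul_eq_zero.1 hCx).resolve_left (pow_ne_zero n (hs.trans_le hx.1).ne')

theorem isUniqueMinimizer_of_firstVariation_nonneg (hs : 0 < s) (hsst : s ≤ st)
    (h₀ : Adm1 s st a b g₀ G₀) (hG₀ : ContinuousOn G₀ (Icc s st))
    (hvar : ∀ g G, Adm1 s st a b g G → 0 ≤ firstVariation n s st g₀ G₀ g G) :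
    IsUniqueMinimizer n s st a b g₀ G₀ := by
  refine ⟨h₀, fun g G hg ↦ ?_⟩
  set δ : ℝ → ℝ := fun r ↦ (G r - G₀ r) + n / r * (g r - g₀ r)
  have hexp := Itilde_eq_add_firstVariation (n := n) hs hsst hg h₀ hG₀
  have hvar := hvar g G hg
  have hQ : 0 ≤ ∫ r in s..st, δ r ^ 2 * r :=
    intervalIntegral.integral_nonneg hsst fun r hr ↦
      mul_nonneg (sq_nonneg _) (hs.trans_le hr.1).le
  refine ⟨by linarith, fun heq ↦ ?_⟩
  have hQ0 : ∫ r in s..st, δ r ^ 2 * r = 0 := by linarith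
  rw [intervalIntegral.integral_eq_zero_iff_of_le_of_nonneg_ae hsst
    ((ae_restrict_iff' measurableSet_Ioc).2 (.of_forall fun r hr ↦
      mul_nonneg (sq_nonneg _) (hs.trans hr.1).le))
    (intervalIntegrable_variation_sq hs hsst hg h₀ hG₀), EventuallyEq,
    ae_restrict_iff' measurableSet_Ioc] at hQ0
  have hΦ := integral_eq_zero_of_ae_add_div_mul_eq_zero (n := n) hs hsst (hg.2.1.sub h₀.2.1) (by
    filter_upwards [hQ0] with r hr hmem
    rw [← hg.sub_eq_integral h₀ (Ioc_subset_Icc_self hmem)]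
    simpa [(hs.trans hmem.1).ne'] using hr hmem)
  intro x hx
  linarith [hg.sub_eq_integral h₀ hx, hΦ x hx]

end Variational

section Candidates

variable {n : ℕ} {s st a b t τ : ℝ} {g G g₀ G₀ : ℝ → ℝ}

theorem integral_variation_of_eqOn_eta (hs : 0 < s) (hτ : τ ∈ Icc s st)
    (hg : Adm1 s st a b g G) (h₀ : Adm1 s st a b g₀ G₀)
    (hg₀ : ∀ r ∈ Icc s τ, g₀ r = eta n s a b t r)
    (hG₀ : ∀ r ∈ Icc s τ, G₀ r = etaDeriv n s a b t r) :
    ∫ r in s..τ, (G₀ r + n / r * g₀ r) * ((G r - G₀ r) + n / r * (g r - g₀ r)) * r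
      = 2 * n * etaA n s a b t * (τ ^ n * (g τ - g₀ τ)) := by
  have hsub : ∀ r ∈ Icc s τ, r ∈ Icc s st := fun r hr ↦ ⟨hr.1, hr.2.trans hτ.2⟩
  rw [hg.sub_eq_integral h₀ hτ, ← integral_pow_mul_add_primitive n
    ((hg.intervalIntegrable_of_mem hτ).sub (h₀.intervalIntegrable_of_mem hτ)),
    ← intervalIntegral.integral_const_mul]
  refine intervalIntegral.integral_congr fun r hr ↦ ?_
  rw [uIcc_of_le hτ.1] at hr
  have hr0 : r ≠ 0 := (hs.trans_le hr.1).ne'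
  rw [← hg.sub_eq_integral h₀ (hsub r hr), natCast_mul_pow_sub_one hr0, hg₀ r hr, hG₀ r hr]
  linear_combination (G r - etaDeriv n s a b t r + n / r * (g r - eta n s a b t r)) *
    etaDeriv_add_div_mul_eta_mul (n := n) (s := s) (a := a) (b := b) (t := t) hr0

theorem le_integral_variation_of_eqOn_const (hs : 0 < s) (hτ : τ ∈ Icc s st) (ha : 0 ≤ a)
    (hg : Adm1 s st a b g G) (hg₀ : ∀ r ∈ Icc τ st, g₀ r = a) (hG₀ : ∀ r ∈ Icc τ st, G₀ r = 0) :
    n * a * (a - g τ)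
      ≤ ∫ r in τ..st, (G₀ r + n / r * g₀ r) * ((G r - G₀ r) + n / r * (g r - g₀ r)) * r := by
  have hst : st ∈ Icc s st := ⟨hτ.1.trans hτ.2, le_rfl⟩
  have hG : IntervalIntegrable G volume τ st :=
    hg.2.1.mono_set (uIcc_subset_uIcc (Icc_subset_uIcc hτ) (Icc_subset_uIcc hst))
  have hquot : ContinuousOn (fun r ↦ (g r - a) / r) (Icc τ st) :=
    ((hg.continuousOn.mono (Icc_subset_Icc_left hτ.1)).sub continuousOn_const).div
      continuousOn_id fun r hr ↦ (hs.trans_le (hτ.1.trans hr.1)).ne'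
  have hquot_nonneg : 0 ≤ ∫ r in τ..st, (g r - a) / r :=
    intervalIntegral.integral_nonneg hτ.2 fun r hr ↦ div_nonneg
      (sub_nonneg.2 (hg.2.2.2.2.1 ▸ hg.antitoneOn ⟨hτ.1.trans hr.1, hr.2⟩ hst hr.2))
      (hs.trans_le (hτ.1.trans hr.1)).le
  have hcongr : ∀ r ∈ uIcc τ st,
      (G₀ r + n / r * g₀ r) * ((G r - G₀ r) + n / r * (g r - g₀ r)) * r
        = n * a * G r + n ^ 2 * a * ((g r - a) / r) := fun r hr ↦ by
    rw [uIcc_of_le hτ.2] at hr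
    have hr0 : r ≠ 0 := (hs.trans_le (hτ.1.trans hr.1)).ne'
    rw [hg₀ r hr, hG₀ r hr]
    field_simp
    ring
  rw [intervalIntegral.integral_congr hcongr, intervalIntegral.integral_add
    (hG.const_mul _) ((hquot.intervalIntegrable_of_Icc hτ.2).const_mul _),
    intervalIntegral.integral_const_mul, intervalIntegral.integral_const_mul,
    hg.integral_eq_sub hτ hst, hg.2.2.2.2.1]
  nlinarith [mul_nonneg (mul_nonneg (sq_nonneg (n : ℝ)) ha) hquot_nonneg]

end Candidates

section Minimizers

variable {n : ℕ} {s st a b t₀ : ℝ}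

theorem isUniqueMinimizer_eta (hn : n ≠ 0) (hs : 0 < s) (hsst : s < st) (hst₀ : st ≤ t₀)
    (ha : 0 < a) (hab : a < b)
    (hroot : a * (t₀ ^ n) ^ 2 + a * (s ^ n) ^ 2 = 2 * b * s ^ n * t₀ ^ n) :
    IsUniqueMinimizer n s st a b (eta n s a b st) (deriv (eta n s a b st)) := by
  have hderiv : ∀ r ∈ Icc s st, deriv (eta n s a b st) r = etaDeriv n s a b st r :=
    fun r hr ↦ (hasDerivAt_eta (hs.trans_le hr.1).ne').deriv
  have hcont : ContinuousOn (deriv (eta n s a b st)) (Icc s st) :=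
    ContinuousOn.congr
      (fun r hr ↦ (continuousAt_etaDeriv (hs.trans_le hr.1).ne').continuousWithinAt)
      hderiv
  have h₀ : Adm1 s st a b (eta n s a b st) (deriv (eta n s a b st)) :=
    .of_hasDerivAt hsst.le
      (fun r hr ↦ hderiv r hr ▸ hasDerivAt_eta (hs.trans_le hr.1).ne') hcont
      (eta_left hn hs hsst) (eta_right hn hs hsst)
      (fun r hr ↦ hderiv r hr ▸ etaDeriv_nonpos hn hs hsst hst₀ ha hab hroot hr)
  refine isUniqueMinimizer_of_firstVariation_nonneg hs hsst.le h₀ hcont fun g G hg ↦ ?_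
  rw [firstVariation, integral_variation_of_eqOn_eta hs ⟨hsst.le, le_rfl⟩ hg h₀
    (fun _ _ ↦ rfl) hderiv, hg.2.2.2.2.1, h₀.2.2.2.2.1, sub_self, mul_zero, mul_zero]

/-- Past `t₀` the candidate is frozen at the value `η_{t₀}(t₀) = a`; since `η_{t₀}′(t₀) = 0` the
glued function is still `C¹`. -/
theorem isUniqueMinimizer_eta_min (hn : n ≠ 0) (hs : 0 < s) (ht₀ : s < t₀) (ht₀st : t₀ < st)
    (ha : 0 < a) (hab : a < b) (hcrit : etaDeriv n s a b t₀ t₀ = 0) :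
    IsUniqueMinimizer n s st a b (fun r ↦ eta n s a b t₀ (min r t₀))
      (deriv fun r ↦ eta n s a b t₀ (min r t₀)) := by
  set g₀ : ℝ → ℝ := fun r ↦ eta n s a b t₀ (min r t₀)
  have hsst : s < st := ht₀.trans ht₀st
  have hd : ∀ r ∈ Icc s st, HasDerivAt g₀ (etaDeriv n s a b t₀ (min r t₀)) r := fun r hr ↦
    hasDerivAt_comp_min (hasDerivAt_eta (lt_min (hs.trans_le hr.1) (hs.trans ht₀)).ne') hcrit
  have hderiv : ∀ r ∈ Icc s st, deriv g₀ r = etaDeriv n s a b t₀ (min r t₀) :=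
    fun r hr ↦ (hd r hr).deriv
  have hcont : ContinuousOn (deriv g₀) (Icc s st) :=
    ContinuousOn.congr (fun r hr ↦ ((continuousAt_etaDeriv
      (lt_min (hs.trans_le hr.1) (hs.trans ht₀)).ne').comp (f := fun x ↦ min x t₀)
        (by fun_prop)).continuousWithinAt) hderiv
  have hg₀t₀ : g₀ t₀ = a := by simp [g₀, eta_right hn hs ht₀]
  have h₀ : Adm1 s st a b g₀ (deriv g₀) :=
    .of_hasDerivAt hsst.le (fun r hr ↦ hderiv r hr ▸ hd r hr) hcont
      (by simp [g₀, ht₀.le, eta_left hn hs ht₀]) (by simp [g₀, ht₀st.le, eta_right hn hs ht₀])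
      (fun r hr ↦ hderiv r hr ▸ etaDeriv_nonpos hn hs ht₀ le_rfl ha hab
        (root_of_etaDeriv_self_eq_zero hn hs ht₀ hcrit)
        ⟨le_min hr.1 ht₀.le, min_le_right r t₀⟩)
  refine isUniqueMinimizer_of_firstVariation_nonneg hs hsst.le h₀ hcont fun g G hg ↦ ?_
  have ht₀mem : t₀ ∈ Icc s st := ⟨ht₀.le, ht₀st.le⟩
  have hint := intervalIntegrable_variation (n := n) hs hsst.le hg h₀ hcont
  rw [firstVariation, ← intervalIntegral.integral_add_adjacent_intervals
    (hint.mono_set (uIcc_subset_uIcc left_mem_uIcc (Icc_subset_uIcc ht₀mem)))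
    (hint.mono_set (uIcc_subset_uIcc (Icc_subset_uIcc ht₀mem) right_mem_uIcc)),
    integral_variation_of_eqOn_eta (t := t₀) hs ht₀mem hg h₀ (fun r hr ↦ by simp [g₀, hr.2])
      (fun r hr ↦ by rw [hderiv r ⟨hr.1, hr.2.trans ht₀st.le⟩, min_eq_left hr.2]), hg₀t₀]
  have hconst := le_integral_variation_of_eqOn_const (n := n) (g₀ := g₀) (G₀ := deriv g₀) hs
    ht₀mem ha.le hg
    (fun r hr ↦ by simp [g₀, hr.1, eta_right hn hs ht₀])
    (fun r hr ↦ by rw [hderiv r ⟨ht₀.le.trans hr.1, hr.2⟩, min_eq_right hr.1, hcrit])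
  have h2A := two_mul_etaA_mul_pow_self hn hs ht₀ hcrit
  linear_combination hconst - (n * (g t₀ - a)) * h2A

end Minimizers

/-- with `t₀ > s` the critical radius (`η′_{t₀}(t₀) = 0`), the
function `g̃` equal to `η_{st}` if `t₀ ≥ st`, and to `η_{t₀}` on `[s,t₀]`
extended by the constant `a` on `[t₀,st]` if `t₀ < st`, is nonincreasing (in
particular if `t₀ ≥ st` then `η_{st}` is nonincreasing on `[s,st]`) and is
the unique minimizer of `Ĩ` over `𝒞₁`. (`st` stands for `s̃`.) -/
theorem stmt18 (n : ℕ) (hn : 1 ≤ n) (s st a b t₀ : ℝ)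
    (hs : 0 < s) (hsst : s < st) (ha : 0 < a) (hab : a < b)
    (ht₀ : s < t₀) (hcrit : deriv (eta n s a b t₀) t₀ = 0) :
    (st ≤ t₀ → AntitoneOn (eta n s a b st) (Icc s st)) ∧
    (∀ gtil : ℝ → ℝ,
      gtil = (fun r => if st ≤ t₀ then eta n s a b st r
                       else if r ≤ t₀ then eta n s a b t₀ r else a) →
      Adm1 s st a b gtil (deriv gtil) ∧
      (∀ g G : ℝ → ℝ, Adm1 s st a b g G →
        Itilde n s st gtil (deriv gtil) ≤ Itilde n s st g G ∧
        (Itilde n s st gtil (deriv gtil) = Itilde n s st g G → EqOn g gtil (Icc s st)))) := by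
  have hn0 : n ≠ 0 := by omega
  have hcrit₀ : etaDeriv n s a b t₀ t₀ = 0 := (hasDerivAt_eta (hs.trans ht₀).ne').deriv ▸ hcrit
  have hroot := root_of_etaDeriv_self_eq_zero hn0 hs ht₀ hcrit₀
  refine ⟨fun hst₀ ↦ (isUniqueMinimizer_eta hn0 hs hsst hst₀ ha hab hroot).1.antitoneOn,
    fun gtil hgtil ↦ ?_⟩
  by_cases hst₀ : st ≤ t₀
  · obtain rfl : gtil = eta n s a b st := by simp [hgtil, hst₀]
    exact isUniqueMinimizer_eta hn0 hs hsst hst₀ ha hab hroot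
  · obtain rfl : gtil = fun r ↦ eta n s a b t₀ (min r t₀) := by
      ext r
      rcases le_or_gt r t₀ with hr | hr
      · simp [hgtil, hst₀, hr]
      · simp [hgtil, hst₀, hr.le, not_le.2 hr, eta_right hn0 hs ht₀]
    exact isUniqueMinimizer_eta_min hn0 hs ht₀ (not_le.1 hst₀) ha hab hcrit₀
end
end

section
/- Let n ≥ 1 and let f: [s,1] → [0,1] be in W^{1,2} with f(s) = 1/2, f(r₀) = 1 for some r₀ ∈ (s,1), and f(1) = α ∈ (0,1). Then for the n-axially symmetric map u(r,θ) = Π⁻¹(f(r)(cos nθ, sin nθ)), the energy satisfies E(u, D₁ \ D_s) ≥ (2πn − 4πn·(1/4)/(1+1/4)) + (2πn − 4πn·α²/(1+α²)) = 4πn − (4πn/5) − 4πnα²/(1+α²). -/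
/-!
The energy density dominates the area density: by AM-GM,
`r f'² + n² f² / r ≥ 2 n |f f'|`, so the energy integrand bounds `|g'|` for
`g = n f² / (1 + f²)`; here `4π g(r)` is the area, counted `n` times, of the cap `Π⁻¹(D_{f(r)})`.
Hence the energy on `[s, r₀]` is at least `g r₀ - g s = n/2 - n/5`, and on `[r₀, 1]`
at least `g r₀ - g 1 = n/2 - n α² / (1 + α²)`.
-/

open MeasureTheory Real Set

theorem HasDerivAt.sq_div_one_add_sq {f : ℝ → ℝ} {f' x : ℝ} (hf : HasDerivAt f f' x) :
    HasDerivAt (fun y => f y ^ 2 / (1 + f y ^ 2)) (2 * f x * f' / (1 + f x ^ 2) ^ 2) x := by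
  have hsq : HasDerivAt (fun y => f y ^ 2) (2 * f x * f') x :=
    (hf.fun_pow 2).congr_deriv (by norm_num)
  refine (hsq.fun_div (hsq.const_add 1) (by positivity)).congr_deriv ?_
  field_simp
  ring

theorem abs_mul_two_mul_div_le_energy_density (n a b : ℝ) {r : ℝ} (hr : 0 < r) :
    |n * (2 * a * b / (1 + a ^ 2) ^ 2)| ≤ (b ^ 2 + n ^ 2 * a ^ 2 / r ^ 2) / (1 + a ^ 2) ^ 2 * r := by
  have hrhs : (b ^ 2 + n ^ 2 * a ^ 2 / r ^ 2) / (1 + a ^ 2) ^ 2 * r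
      = (r ^ 2 * b ^ 2 + n ^ 2 * a ^ 2) / r / (1 + a ^ 2) ^ 2 := by
    field_simp
  have hamgm : |n * (2 * a * b)| ≤ (r ^ 2 * b ^ 2 + n ^ 2 * a ^ 2) / r := by
    rw [le_div_iff₀ hr]
    rcases abs_cases (n * (2 * a * b)) with ⟨habs, -⟩ | ⟨habs, -⟩ <;> rw [habs] <;>
      nlinarith [sq_nonneg (r * b + n * a), sq_nonneg (r * b - n * a)]
  rw [hrhs, ← mul_div_assoc, abs_div, abs_of_pos (by positivity : (0 : ℝ) < (1 + a ^ 2) ^ 2)]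
  gcongr

theorem abs_sub_le_integral_of_hasDerivAt_of_abs_le {G G' φ : ℝ → ℝ} {a b : ℝ} (hab : a ≤ b)
    (hG : ∀ x ∈ Icc a b, HasDerivAt G (G' x) x) (hφ : IntervalIntegrable φ volume a b)
    (hle : ∀ x ∈ Icc a b, |G' x| ≤ φ x) :
    |G b - G a| ≤ ∫ x in a..b, φ x := by
  have hcont : ContinuousOn G (Icc a b) := fun x hx => (hG x hx).continuousAt.continuousWithinAt
  have hφ' : IntegrableOn φ (Icc a b) volume := by
    rw [integrableOn_Icc_iff_integrableOn_Ioc]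
    exact (intervalIntegrable_iff_integrableOn_Ioc_of_le hab).1 hφ
  rw [abs_le]
  constructor
  · have := intervalIntegral.sub_le_integral_of_hasDeriv_right_of_le hab hcont.neg
      (fun x hx => (hG x (Ioo_subset_Icc_self hx)).neg.hasDerivWithinAt) hφ'
      (fun x hx => (neg_le_abs _).trans (hle x (Ioo_subset_Icc_self hx)))
    simp only [Pi.neg_apply] at this
    linarith
  · exact intervalIntegral.sub_le_integral_of_hasDeriv_right_of_le hab hcont
      (fun x hx => (hG x (Ioo_subset_Icc_self hx)).hasDerivWithinAt) hφ'
      (fun x hx => (le_abs_self _).trans (hle x (Ioo_subset_Icc_self hx)))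

theorem abs_sub_le_integral_energy_density (n : ℝ) {f f' : ℝ → ℝ} {a b : ℝ}
    (ha : 0 < a) (hab : a ≤ b) (hder : ∀ r ∈ Icc a b, HasDerivAt f (f' r) r)
    (hint : IntervalIntegrable
      (fun r => (f' r ^ 2 + n ^ 2 * f r ^ 2 / r ^ 2) / (1 + f r ^ 2) ^ 2 * r) volume a b) :
    |n * (f b ^ 2 / (1 + f b ^ 2)) - n * (f a ^ 2 / (1 + f a ^ 2))| ≤
      ∫ r in a..b, (f' r ^ 2 + n ^ 2 * f r ^ 2 / r ^ 2) / (1 + f r ^ 2) ^ 2 * r :=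
  abs_sub_le_integral_of_hasDerivAt_of_abs_le (G := fun r => n * (f r ^ 2 / (1 + f r ^ 2))) hab
    (fun r hr => (hder r hr).sq_div_one_add_sq.const_mul n) hint
    (fun _ hr => abs_mul_two_mul_div_le_energy_density n _ _ (ha.trans_le hr.1))

theorem stmt19_general (n : ℕ) (s r₀ α : ℝ)
    (hs : 0 < s) (hsr : s < r₀) (hr1 : r₀ < 1)
    (f f' : ℝ → ℝ)
    (hder : ∀ r ∈ Icc s 1, HasDerivAt f (f' r) r)
    (hfs : f s = 1/2) (hfr₀ : f r₀ = 1) (hf1 : f 1 = α)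
    (hint : IntervalIntegrable
      (fun r => ((f' r) ^ 2 + (n : ℝ) ^ 2 * (f r) ^ 2 / r ^ 2) / (1 + (f r) ^ 2) ^ 2 * r)
      volume s 1) :
    4 * π * (∫ r in s..1,
        ((f' r) ^ 2 + (n : ℝ) ^ 2 * (f r) ^ 2 / r ^ 2) / (1 + (f r) ^ 2) ^ 2 * r)
      ≥ 4 * π * (n : ℝ) - 4 * π * (n : ℝ) / 5 - 4 * π * (n : ℝ) * α ^ 2 / (1 + α ^ 2) := by
  have hr₀ : r₀ ∈ uIcc s 1 := mem_uIcc_of_le hsr.le hr1.le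
  have hint₁ := hint.mono_set (uIcc_subset_uIcc_left hr₀)
  have hint₂ := hint.mono_set (uIcc_subset_uIcc_right hr₀)
  have hinner := abs_sub_le_integral_energy_density n hs hsr.le
    (fun r hr => hder r (Icc_subset_Icc_right hr1.le hr)) hint₁
  have houter := abs_sub_le_integral_energy_density n (hs.trans hsr) hr1.le
    (fun r hr => hder r (Icc_subset_Icc_left hsr.le hr)) hint₂
  rw [hfs, hfr₀] at hinner
  rw [hfr₀, hf1] at houter
  rw [← intervalIntegral.integral_add_adjacent_intervals hint₁ hint₂]
  calc 4 * π * (n : ℝ) - 4 * π * (n : ℝ) / 5 - 4 * π * (n : ℝ) * α ^ 2 / (1 + α ^ 2)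
      = 4 * π * ((n * (1 ^ 2 / (1 + 1 ^ 2)) - n * ((1 / 2) ^ 2 / (1 + (1 / 2) ^ 2)))
          + -(n * (α ^ 2 / (1 + α ^ 2)) - n * (1 ^ 2 / (1 + 1 ^ 2)))) := by ring
    _ ≤ _ := by
      gcongr
      · exact (le_abs_self _).trans hinner
      · exact (neg_le_abs _).trans houter

/-- if the profile `f : [s,1] → [0,1]` satisfies `f(s) = 1/2`,
`f(r₀) = 1` for some `r₀ ∈ (s,1)` and `f(1) = α ∈ (0,1)`, then the energy
`E(u, D₁\D_s) = 4π ∫_s^1 (f′² + n²f²/r²)/(1+f²)² r dr` of the associated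
`n`-axially symmetric map satisfies
`E ≥ 4πn − 4πn/5 − 4πn α²/(1+α²)`. -/
theorem stmt19 (n : ℕ) (hn : 1 ≤ n) (s r₀ α : ℝ)
    (hs : 0 < s) (hsr : s < r₀) (hr1 : r₀ < 1) (hα0 : 0 < α) (hα1 : α < 1)
    (f f' : ℝ → ℝ)
    (hder : ∀ r ∈ Icc s 1, HasDerivAt f (f' r) r)
    (hbd : ∀ r ∈ Icc s 1, 0 ≤ f r ∧ f r ≤ 1)
    (hfs : f s = 1/2) (hfr₀ : f r₀ = 1) (hf1 : f 1 = α)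
    (hint : IntervalIntegrable
      (fun r => ((f' r) ^ 2 + (n : ℝ) ^ 2 * (f r) ^ 2 / r ^ 2) / (1 + (f r) ^ 2) ^ 2 * r)
      volume s 1) :
    4 * π * (∫ r in s..1,
        ((f' r) ^ 2 + (n : ℝ) ^ 2 * (f r) ^ 2 / r ^ 2) / (1 + (f r) ^ 2) ^ 2 * r)
      ≥ 4 * π * (n : ℝ) - 4 * π * (n : ℝ) / 5 - 4 * π * (n : ℝ) * α ^ 2 / (1 + α ^ 2) :=
  stmt19_general n s r₀ α hs hsr hr1 f f' hder hfs hfr₀ hf1 hint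
end
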